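/- Let n, k, l be integers with 1 ≤ k < l ≤ n−1 and n = k + l. Then the automorphism group of the set-inclusion graph G(n,k,l) is isomorphic to Sym([n]) × ℤ₂. -/

import Mathlib

open SimpleGraph

/-- The set-inclusion graph `G(n,k,l)`: vertices are all `k`-element subsets and all
`l`-element subsets of `[n]`, two distinct vertices being adjacent iff one is contained
in the other. -/
def setInclusionGraph (n k l : ℕ) :
    SimpleGraph {s : Finset (Fin n) // s.card = k ∨ s.card = l} where
  Adj v w := v.1 ⊂ w.1 ∨ w.1 ⊂ v.1
  symm := ⟨by intro v w h; tauto⟩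
  loopless := ⟨by intro v h; rcases h with h | h <;> exact h.ne rfl⟩

/-!
Permutations of `Fin n` and complementation (which exchanges `k`-sets and `l`-sets because
`n = k + l`) are commuting automorphisms of `G(n, k, l)`; they give a homomorphism
`Sym(n) × ℤ₂ → Aut`, injective because a permutation fixing every `k`-set is trivial.
For surjectivity, after composing with complementation an automorphism maps `k`-sets to
`k`-sets. Counting common neighbours shows that it then preserves the Johnson graph `J(n, k)`,
whose automorphisms come from permutations since `n ≥ 2k + 1`. An automorphism fixing all
`k`-sets is the identity, as an `l`-set is determined by its `k`-subsets.
-/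

open Finset

theorem Nat.choose_lt_choose_of_lt {a b r : ℕ} (hr : 0 < r) (hra : r ≤ a) (hab : a < b) :
    a.choose r < b.choose r := by
  obtain ⟨r, rfl⟩ : ∃ r', r = r' + 1 := ⟨r - 1, by omega⟩
  calc a.choose (r + 1) < (a + 1).choose (r + 1) := by
        rw [Nat.choose_succ_succ']
        have := Nat.choose_pos (by omega : r ≤ a)
        omega
    _ ≤ b.choose (r + 1) := Nat.choose_le_choose (r + 1) hab

namespace Finset

variable {α : Type*}

theorem subset_of_forall_subset_of_card_eq {k : ℕ} {S T : Finset α} (hk : 1 ≤ k)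
    (hkS : k ≤ #S) (h : ∀ s, #s = k → s ⊆ S → s ⊆ T) : S ⊆ T := by
  intro x hx
  obtain ⟨s, hxs, hsS, hs⟩ :=
    exists_subsuperset_card_eq (singleton_subset_iff.2 hx) (by simpa using hk) hkS
  exact h s hs hsS (singleton_subset_iff.1 hxs)

variable [DecidableEq α]

theorem subset_of_forall_superset_of_card_eq [Fintype α] {m : ℕ} {A A' : Finset α}
    (hAm : #A ≤ m) (hm : m < Fintype.card α) (h : ∀ s, #s = m → A ⊆ s → A' ⊆ s) :
    A' ⊆ A := by
  intro x hx
  by_contra hxA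
  obtain ⟨s, hAs, hsx, hs⟩ := exists_subsuperset_card_eq (t := univ.erase x)
    (fun y hy => mem_erase.2 ⟨fun hyx => hxA (hyx ▸ hy), mem_univ y⟩) hAm
    (by rw [card_erase_of_mem (mem_univ x), card_univ]; omega)
  exact (notMem_erase x univ) (hsx (h s hs hAs hx))

theorem lt_card_union_of_ne {j : ℕ} {s t : Finset α} (hs : #s = j) (ht : #t = j)
    (hst : s ≠ t) : j < #(s ∪ t) := by
  have : s ⊂ s ∪ t := ssubset_iff_subset_ne.2 ⟨subset_union_left, fun h =>
    hst (eq_of_subset_of_card_le (union_eq_left.1 h.symm) (by omega)).symm⟩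
  simpa [hs] using card_lt_card this

theorem card_union_of_card_eq_of_subset_inter {j : ℕ} {A s t : Finset α} (hA : #A = j)
    (hs : #s = j + 1) (ht : #t = j + 1) (hst : s ≠ t) (hAs : A ⊆ s) (hAt : A ⊆ t) :
    #(s ∪ t) = j + 2 := by
  have := lt_card_union_of_ne hs ht hst
  have := card_le_card (subset_inter hAs hAt)
  have := card_union_add_card_inter s t
  omega

theorem eq_of_forall_card_union_eq_succ {β : Type*} {j : ℕ} (φ : Finset α → β)
    (hφ : ∀ s t, #s = j → #t = j → #(s ∪ t) = j + 1 → φ s = φ t) :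
    ∀ s t, #s = j → #t = j → φ s = φ t := by
  intro s t hs ht
  induction hd : #(s \ t) generalizing s with
  | zero =>
    rw [card_eq_zero, sdiff_eq_empty_iff_subset] at hd
    rw [eq_of_subset_of_card_le hd (by omega)]
  | succ d ih =>
    obtain ⟨x, hx⟩ : (s \ t).Nonempty := by rw [← card_pos]; omega
    obtain ⟨y, hy⟩ : (t \ s).Nonempty := by
      rw [← card_pos, ← card_sdiff_comm (hs.trans ht.symm), hd]
      exact d.succ_pos
    rw [mem_sdiff] at hx hy
    have hys : y ∉ s.erase x := fun h => hy.2 (mem_of_mem_erase h)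
    have hs' : #(insert y (s.erase x)) = j := by
      rw [card_insert_of_notMem hys, card_erase_add_one hx.1, hs]
    have hss' : s ∪ insert y (s.erase x) = insert y s := by
      ext z; simp only [mem_union, mem_insert, mem_erase]; tauto
    refine (hφ s _ hs hs' ?_).trans (ih _ hs' ?_)
    · rw [hss', card_insert_of_notMem hy.2, hs]
    · rw [insert_sdiff_of_mem _ hy.1, erase_sdiff_comm, card_erase_of_mem (mem_sdiff.2 hx), hd]
      rfl

theorem card_inter_lt_left_of_not_subset {s t : Finset α} (h : ¬s ⊆ t) : #(s ∩ t) < #s :=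
  card_lt_card <| ssubset_iff_subset_ne.2
    ⟨inter_subset_left, fun e => h (e ▸ inter_subset_right)⟩

theorem subset_inter_or_subset_union {j : ℕ} {s t u : Finset α} (hs : #s = j + 1)
    (ht : #t = j + 1) (hu : #u = j + 1) (hst : #(s ∪ t) = j + 2) (hsu : #(s ∪ u) = j + 2)
    (htu : #(t ∪ u) = j + 2) : s ∩ t ⊆ u ∨ u ⊆ s ∪ t := by
  refine or_iff_not_imp_left.2 fun hA => ?_
  have hAu := card_inter_lt_left_of_not_subset hA
  have hUu : #((s ∪ t) ∩ u) + #(s ∩ t ∩ u) = #(s ∩ u) + #(t ∩ u) := by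
    rw [union_inter_distrib_right, inter_inter_distrib_right]
    exact card_union_add_card_inter _ _
  have := card_union_add_card_inter s t
  have := card_union_add_card_inter s u
  have := card_union_add_card_inter t u
  exact inter_eq_right.1 (eq_of_subset_of_card_le inter_subset_right (by omega))

/-- Pairwise adjacent vertices of the Johnson graph `J(α, j + 1)` either share a common `j`-set
or all lie inside a common `(j + 2)`-set, which has only `j + 2` subsets of size `j + 1`. -/
theorem exists_subset_of_pairwise_card_union {j : ℕ} {C : Finset (Finset α)}
    (hC : ∀ s ∈ C, #s = j + 1)
    (hadj : (C : Set (Finset α)).Pairwise fun s t => #(s ∪ t) = j + 2)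
    (hbig : j + 3 ≤ #C) : ∃ B, #B = j ∧ ∀ u ∈ C, B ⊆ u := by
  obtain ⟨s, hs, t, ht, hst⟩ := one_lt_card.1 (by omega : 1 < #C)
  have hA : #(s ∩ t) = j := by
    have := card_union_add_card_inter s t
    have := hadj hs ht hst
    have := hC s hs
    have := hC t ht
    omega
  have dichotomy : ∀ v ∈ C, v ≠ s → v ≠ t → s ∩ t ⊆ v ∨ v ⊆ s ∪ t :=
    fun v hv hvs hvt =>
    subset_inter_or_subset_union (hC s hs) (hC t ht) (hC v hv) (hadj hs ht hst)
      (hadj hs hv (Ne.symm hvs)) (hadj ht hv (Ne.symm hvt))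
  refine ⟨s ∩ t, hA, ?_⟩
  by_contra! ⟨u, hu, hAu⟩
  have hus : u ≠ s := by rintro rfl; exact hAu inter_subset_left
  have hut : u ≠ t := by rintro rfl; exact hAu inter_subset_right
  have huU : u ⊆ s ∪ t := (dichotomy u hu hus hut).resolve_left hAu
  have hU : ∀ v ∈ C, v ⊆ s ∪ t := by
    intro v hv
    by_contra hvU
    have hvs : v ≠ s := by rintro rfl; exact hvU subset_union_left
    have hvt : v ≠ t := by rintro rfl; exact hvU subset_union_right
    have hAv : s ∩ t ⊆ v := (dichotomy v hv hvs hvt).resolve_right hvU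
    -- `v` meets `s ∪ t` exactly in `s ∩ t`, so `u ⊆ s ∪ t` meets `v` inside `s ∩ t`
    have hvU' := card_inter_lt_left_of_not_subset hvU
    have hvA : s ∩ t = v ∩ (s ∪ t) := eq_of_subset_of_card_le
      (subset_inter hAv inter_subset_union) (by rw [hC v hv] at hvU'; omega)
    have huv : u ∩ v ⊆ s ∩ t ∩ u := by
      rw [hvA]
      exact subset_inter (subset_inter inter_subset_right (inter_subset_left.trans huU))
        inter_subset_left
    have hAu' := card_inter_lt_left_of_not_subset hAu
    have := card_le_card huv
    have := card_union_add_card_inter u v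
    have := hadj hu hv (by rintro rfl; exact hAu hAv)
    have := hC u hu
    have := hC v hv
    omega
  have hCU : C ⊆ (s ∪ t).powersetCard (j + 1) := fun v hv =>
    mem_powersetCard.2 ⟨hU v hv, hC v hv⟩
  have := card_le_card hCU
  rw [card_powersetCard, hadj hs ht hst, Nat.choose_succ_self_right] at this
  omega

theorem card_filter_powersetCard_succ_subset [Fintype α] {j : ℕ} {A : Finset α} (hA : #A = j) :
    #((univ.powersetCard (j + 1)).filter (A ⊆ ·)) = Fintype.card α - j := by
  rw [card_filter_powersetCard_subset A univ _ (subset_univ A) (by omega), card_univ, hA,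
    Nat.add_sub_cancel_left, Nat.choose_one_right]

theorem card_filter_powersetCard_subset_lt [Fintype α] {m : ℕ} {U U' : Finset α}
    (hUU' : #U < #U') (hU : #U ≤ m) (hm : m < Fintype.card α) :
    #((univ.powersetCard m).filter (U' ⊆ ·)) < #((univ.powersetCard m).filter (U ⊆ ·)) := by
  rw [card_filter_powersetCard_subset U univ m (subset_univ U) hU, card_univ]
  by_cases hU' : #U' ≤ m
  · have := card_le_univ U'
    set N := Fintype.card α
    rw [card_filter_powersetCard_subset U' univ m (subset_univ U') hU', card_univ,
      Nat.choose_symm_of_eq_add (by omega : N - #U' = m - #U' + (N - m)),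
      Nat.choose_symm_of_eq_add (by omega : N - #U = m - #U + (N - m))]
    exact Nat.choose_lt_choose_of_lt (by omega) (by omega) (by omega)
  · rw [card_eq_zero.2 (filter_eq_empty_iff.2 fun S hS hU'S => by
      have := card_le_card hU'S
      rw [(mem_powersetCard.1 hS).2] at this
      omega)]
    exact Nat.choose_pos (by omega)

end Finset

section Johnson

variable {α : Type*} [DecidableEq α]

/-- The Johnson graph `J(α, j)` has the `j`-sets as vertices, adjacent when their union has
`j + 1` elements. -/
structure IsJohnsonEmbedding (j : ℕ) (g : Finset α → Finset α) : Prop where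
  card_map : ∀ s, #s = j → #(g s) = j
  injOn : Set.InjOn g {s | #s = j}
  card_union : ∀ s t, #s = j → #t = j → #(s ∪ t) = j + 1 → #(g s ∪ g t) = j + 1

def SubsetCompatible (i m : ℕ) (g G : Finset α → Finset α) : Prop :=
  ∀ A s, #A = i → #s = m → (A ⊆ s ↔ g A ⊆ G s)

namespace IsJohnsonEmbedding

variable {j : ℕ} {g : Finset α → Finset α}

theorem subsetCompatible_self (hg : IsJohnsonEmbedding j g) : SubsetCompatible j j g g := by
  intro A s hA hs
  rw [subset_iff_eq_of_card_le (by omega),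
    subset_iff_eq_of_card_le (by rw [hg.card_map A hA, hg.card_map s hs]),
    hg.injOn.eq_iff hA hs]

theorem exists_apply_eq [Fintype α] (hg : IsJohnsonEmbedding j g) {t : Finset α} (ht : #t = j) :
    ∃ s, #s = j ∧ g s = t := by
  obtain ⟨s, hs, rfl⟩ := surj_on_of_inj_on_of_card_le (s := univ.powersetCard j)
    (t := univ.powersetCard j) (fun s _ => g s)
    (fun s hs => mem_powersetCard_univ.2 (hg.card_map s (mem_powersetCard_univ.1 hs)))
    (fun s s' hs hs' h => hg.injOn (mem_powersetCard_univ.1 hs) (mem_powersetCard_univ.1 hs') h)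
    le_rfl t (mem_powersetCard_univ.2 ht)
  exact ⟨s, mem_powersetCard_univ.1 hs, rfl⟩

theorem exists_star [Fintype α] (hg : IsJohnsonEmbedding (j + 1) g)
    (hn : 2 * j + 3 ≤ Fintype.card α) {A : Finset α} (hA : #A = j) :
    ∃ B, #B = j ∧ ∀ s, #s = j + 1 → (A ⊆ s ↔ B ⊆ g s) := by
  have mem_star : ∀ B s : Finset α,
      s ∈ (univ.powersetCard (j + 1)).filter (B ⊆ ·) ↔ #s = j + 1 ∧ B ⊆ s :=
    fun B s => by rw [mem_filter, mem_powersetCard_univ]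
  set C := ((univ.powersetCard (j + 1)).filter (A ⊆ ·)).image g
  have hCcard : #C = Fintype.card α - j := by
    rw [card_image_of_injOn fun s hs t ht =>
      hg.injOn ((mem_star A s).1 hs).1 ((mem_star A t).1 ht).1,
      card_filter_powersetCard_succ_subset hA]
  have hC : ∀ u ∈ C, #u = j + 1 := by
    intro u hu
    obtain ⟨s, hs, rfl⟩ := mem_image.1 hu
    exact hg.card_map s ((mem_star A s).1 hs).1
  have hadj : (C : Set (Finset α)).Pairwise fun u v => #(u ∪ v) = j + 2 := by
    rintro _ hu _ hv hne
    obtain ⟨s, hs, rfl⟩ := mem_image.1 hu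
    obtain ⟨t, ht, rfl⟩ := mem_image.1 hv
    rw [mem_star] at hs ht
    exact hg.card_union s t hs.1 ht.1 (card_union_of_card_eq_of_subset_inter hA hs.1 ht.1
      (fun h => hne (h ▸ rfl)) hs.2 ht.2)
  obtain ⟨B, hB, hBC⟩ := exists_subset_of_pairwise_card_union hC hadj (by omega)
  -- the image of the star of `A` is a clique of the size of a star, hence a whole star
  have hCB : C = (univ.powersetCard (j + 1)).filter (B ⊆ ·) :=
    eq_of_subset_of_card_le (fun u hu => (mem_star B u).2 ⟨hC u hu, hBC u hu⟩)
      (by rw [card_filter_powersetCard_succ_subset hB, hCcard])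
  refine ⟨B, hB, fun s hs => ⟨fun hAs => ?_, fun hBs => ?_⟩⟩
  · exact hBC _ (mem_image_of_mem g ((mem_star A s).2 ⟨hs, hAs⟩))
  obtain ⟨s', hs', hgs⟩ :=
    mem_image.1 (hCB ▸ (mem_star B (g s)).2 ⟨hg.card_map s hs, hBs⟩)
  rw [mem_star] at hs'
  exact hg.injOn hs'.1 hs hgs ▸ hs'.2

theorem exists_descent [Fintype α] (hg : IsJohnsonEmbedding (j + 1) g)
    (hn : 2 * j + 3 ≤ Fintype.card α) :
    ∃ g', IsJohnsonEmbedding j g' ∧ SubsetCompatible j (j + 1) g' g := by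
  choose! g' hg'card hg' using fun A (hA : #A = j) => hg.exists_star hn hA
  have hinj : Set.InjOn g' {A | #A = j} := by
    have hsub : ∀ {A A'}, #A = j → #A' = j → g' A = g' A' → A' ⊆ A := fun hA hA' h =>
      subset_of_forall_superset_of_card_eq (m := j + 1) (by omega) (by omega) fun s hs hAs => by
        rwa [hg' _ hA' s hs, ← h, ← hg' _ hA s hs]
    exact fun A hA A' hA' h => subset_antisymm (hsub hA' hA h.symm) (hsub hA hA' h)
  refine ⟨g', ⟨hg'card, hinj, fun A A' hA hA' hAA' => ?_⟩, fun A s hA hs => hg' A hA s hs⟩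
  have hne : g' A ≠ g' A' := fun h => by
    rw [hinj hA hA' h, union_self] at hAA'
    omega
  have := card_le_card (union_subset ((hg' A hA _ hAA').1 subset_union_left)
    ((hg' A' hA' _ hAA').1 subset_union_right))
  have := lt_card_union_of_ne (hg'card A hA) (hg'card A' hA') hne
  rw [hg.card_map _ hAA'] at *
  omega

end IsJohnsonEmbedding

theorem SubsetCompatible.trans [Fintype α] {j m : ℕ} {g' g G : Finset α → Finset α}
    (h₁ : SubsetCompatible j (j + 1) g' g) (h₂ : SubsetCompatible (j + 1) m g G)
    (hg' : IsJohnsonEmbedding j g') (hg : IsJohnsonEmbedding (j + 1) g)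
    (hG : IsJohnsonEmbedding m G) (hjm : j + 1 ≤ m) : SubsetCompatible j m g' G := by
  refine fun A s hA hs => ⟨fun hAs => ?_, fun hAs => ?_⟩
  · obtain ⟨t, hAt, hts, ht⟩ :=
      exists_subsuperset_card_eq (n := j + 1) hAs (by omega) (by omega)
    exact ((h₁ A t hA ht).1 hAt).trans ((h₂ t s ht hs).1 hts)
  · obtain ⟨u, hAu, hus, hu⟩ := exists_subsuperset_card_eq (n := j + 1) hAs
      (by rw [hg'.card_map A hA]; omega) (by rw [hG.card_map s hs]; omega)
    obtain ⟨t, ht, rfl⟩ := hg.exists_apply_eq hu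
    exact ((h₁ A t hA ht).2 hAu).trans ((h₂ t s ht hs).2 hus)

/-- The stars of `(k - 1)`-sets are the cliques of `J(α, k)` too big to lie in a `(k + 1)`-set,
so `F` induces an embedding of `J(α, k - 1)`; descending to singletons gives the permutation. -/
theorem IsJohnsonEmbedding.exists_perm [Fintype α] {k : ℕ} {F : Finset α → Finset α}
    (hF : IsJohnsonEmbedding k F) (hk : 1 ≤ k) (hn : 2 * k + 1 ≤ Fintype.card α) :
    ∃ σ : Equiv.Perm α, ∀ s, #s = k → F s = s.map σ.toEmbedding := by
  have levels : ∀ j ≤ k, ∃ g, IsJohnsonEmbedding j g ∧ SubsetCompatible j k g F := by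
    intro j hj
    induction hj using Nat.decreasingInduction with
    | self => exact ⟨F, hF, hF.subsetCompatible_self⟩
    | of_succ j hjk ih =>
      obtain ⟨g, hg, hgF⟩ := ih
      obtain ⟨g', hg', hg'g⟩ := hg.exists_descent (by omega)
      exact ⟨g', hg', hg'g.trans hgF hg' hg hF hjk⟩
  obtain ⟨g, hg, hgF⟩ := levels 1 hk
  choose τ hτ using fun x => card_eq_one.1 (hg.card_map {x} (card_singleton x))
  have hτ_inj : Function.Injective τ := fun x y h => singleton_injective <|
    hg.injOn (card_singleton x) (card_singleton y) (by rw [hτ, hτ, h])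
  let σ := Equiv.ofBijective τ (Finite.injective_iff_bijective.1 hτ_inj)
  refine ⟨σ, fun s hs => ?_⟩
  ext y
  obtain ⟨x, rfl⟩ := σ.surjective y
  rw [mem_map_equiv, Equiv.symm_apply_apply, iff_comm, ← singleton_subset_iff,
    hgF {x} s (card_singleton x) hs, hτ, singleton_subset_iff]
  rfl

end Johnson

theorem SimpleGraph.Iso.ncard_commonNeighbors {V W : Type*} {G : SimpleGraph V}
    {G' : SimpleGraph W} (f : G ≃g G') (v w : V) :
    (G'.commonNeighbors (f v) (f w)).ncard = (G.commonNeighbors v w).ncard := by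
  rw [← Set.ncard_image_of_injective _ f.injective]
  congr 1
  ext u
  obtain ⟨x, rfl⟩ := f.surjective u
  simp [mem_commonNeighbors, Iso.map_adj_iff]

theorem Equiv.Perm.eq_one_of_forall_map_eq {α : Type*} [Fintype α] [DecidableEq α]
    {σ : Equiv.Perm α} {k : ℕ} (hk : 1 ≤ k) (hkn : k < Fintype.card α)
    (h : ∀ s : Finset α, #s = k → s.map σ.toEmbedding = s) : σ = 1 := by
  ext x
  have hx := subset_of_forall_superset_of_card_eq (A := {x}) (A' := {σ x}) (by simpa) hkn
    fun s hs hxs => by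
      have := (map_subset_map (f := σ.toEmbedding)).2 hxs
      rwa [map_singleton, h s hs] at this
  exact singleton_subset_singleton.1 hx

namespace SetInclusionGraph

variable {n k l : ℕ}

theorem card_ne_of_adj {v w} (h : (setInclusionGraph n k l).Adj v w) : #v.1 ≠ #w.1 := by
  rcases h with h | h
  · exact (card_lt_card h).ne
  · exact (card_lt_card h).ne'

theorem adj_iff_subset (hkl : k < l) {v w} (hv : #v.1 = k) :
    (setInclusionGraph n k l).Adj v w ↔ #w.1 = l ∧ v.1 ⊆ w.1 := by
  have := w.2
  constructor
  · rintro (h | h)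
    · exact ⟨by have := card_lt_card h; omega, h.subset⟩
    · have := card_lt_card h
      omega
  · rintro ⟨hw, h⟩
    exact Or.inl (Finset.ssubset_iff_subset_ne.2 ⟨h, fun e => by rw [e] at hv; omega⟩)

theorem ncard_commonNeighbors (hkl : k < l) {v w} (hv : #v.1 = k) (hw : #w.1 = k) :
    ((setInclusionGraph n k l).commonNeighbors v w).ncard =
      #((univ.powersetCard l).filter (v.1 ∪ w.1 ⊆ ·)) := by
  rw [← Set.ncard_coe_finset, ← Set.ncard_image_of_injective _ Subtype.val_injective]
  congr 1
  ext S
  simp only [Set.mem_image, mem_commonNeighbors, adj_iff_subset hkl hv, adj_iff_subset hkl hw,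
    mem_coe, mem_filter, mem_powersetCard_univ, union_subset_iff]
  constructor
  · rintro ⟨u, ⟨⟨hu, hvu⟩, -, hwu⟩, rfl⟩
    exact ⟨hu, hvu, hwu⟩
  · rintro ⟨hS, hvS, hwS⟩
    exact ⟨⟨S, .inr hS⟩, ⟨⟨hS, hvS⟩, hS, hwS⟩, rfl⟩

def permAut (σ : Equiv.Perm (Fin n)) : setInclusionGraph n k l ≃g setInclusionGraph n k l where
  toEquiv := σ.finsetCongr.subtypeEquiv fun s => by simp
  map_rel_iff' := by simp [setInclusionGraph, map_ssubset_map]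

def complAut (hsum : n = k + l) : setInclusionGraph n k l ≃g setInclusionGraph n k l where
  toEquiv := (compl_involutive.toPerm _).subtypeEquiv fun s => by
    have := s.card_le_univ
    simp only [Fintype.card_fin] at this
    simp only [Function.Involutive.coe_toPerm, card_compl, Fintype.card_fin]
    omega
  map_rel_iff' := by simp [setInclusionGraph, or_comm]

theorem ext_val {f g : setInclusionGraph n k l ≃g setInclusionGraph n k l}
    (h : ∀ v, (f v).1 = (g v).1) : f = g :=
  RelIso.ext fun v => Subtype.ext (h v)

@[simp]
theorem permAut_apply_val (σ : Equiv.Perm (Fin n)) (v) :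
    (permAut (k := k) (l := l) σ v).1 = v.1.map σ.toEmbedding :=
  rfl

@[simp]
theorem complAut_apply_val (hsum : n = k + l) (v) : (complAut hsum v).1 = v.1ᶜ :=
  rfl

def permHom : Equiv.Perm (Fin n) →* (setInclusionGraph n k l ≃g setInclusionGraph n k l) :=
  MonoidHom.mk' permAut fun σ τ => ext_val fun v => by simp [Finset.map_map, Equiv.Perm.mul_def]

theorem complAut_mul_self (hsum : n = k + l) : complAut hsum * complAut hsum = 1 :=
  ext_val fun v => compl_compl v.1

theorem commute_permAut_complAut (hsum : n = k + l) (σ : Equiv.Perm (Fin n)) :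
    Commute (permAut σ) (complAut hsum) :=
  ext_val fun v => by ext x; simp [mem_map_equiv]

def complHom (hsum : n = k + l) :
    Multiplicative (ZMod 2) →* (setInclusionGraph n k l ≃g setInclusionGraph n k l) where
  toFun ε := complAut hsum ^ ε.toAdd.val
  map_one' := by simp
  map_mul' a b := by
    rw [toAdd_mul, ZMod.val_add, ← pow_eq_pow_mod _ (by rw [sq]; exact complAut_mul_self hsum),
      pow_add]

def autHom (hsum : n = k + l) :
    Equiv.Perm (Fin n) × Multiplicative (ZMod 2) →*
      (setInclusionGraph n k l ≃g setInclusionGraph n k l) :=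
  permHom.noncommCoprod (complHom hsum) fun σ _ => (commute_permAut_complAut hsum σ).pow_right _

theorem autHom_apply (hsum : n = k + l) (σ : Equiv.Perm (Fin n)) (ε : Multiplicative (ZMod 2)) :
    autHom hsum (σ, ε) = permAut σ * complAut hsum ^ ε.toAdd.val :=
  rfl

theorem eq_one_of_forall_card_eq (hk : 1 ≤ k) (hkl : k < l)
    {f : setInclusionGraph n k l ≃g setInclusionGraph n k l} (hf : ∀ v, #v.1 = k → f v = v) :
    f = 1 := by
  refine RelIso.ext fun v => ?_
  show f v = v
  rcases v.2 with hv | hv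
  · exact hf v hv
  have hfv : #(f v).1 = l := (f v).2.resolve_left fun h => by
    rw [f.injective (hf _ h)] at h
    omega
  have key : ∀ s, #s = k → (s ⊆ v.1 ↔ s ⊆ (f v).1) := fun s hs => by
    have := f.map_adj_iff (v := ⟨s, .inl hs⟩) (w := v)
    rw [hf _ hs, adj_iff_subset hkl hs, adj_iff_subset hkl hs, hv, hfv] at this
    simpa using this.symm
  exact Subtype.ext (subset_antisymm
    (subset_of_forall_subset_of_card_eq hk (by omega) fun s hs => (key s hs).2)
    (subset_of_forall_subset_of_card_eq hk (by omega) fun s hs => (key s hs).1))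

def lowerMap (f : setInclusionGraph n k l ≃g setInclusionGraph n k l) (s : Finset (Fin n)) :
    Finset (Fin n) :=
  if h : #s = k then (f ⟨s, .inl h⟩).1 else s

theorem lowerMap_of_card_eq (f : setInclusionGraph n k l ≃g setInclusionGraph n k l)
    {s : Finset (Fin n)} (hs : #s = k) : lowerMap f s = (f ⟨s, .inl hs⟩).1 :=
  dif_pos hs

theorem lowerMap_injOn (f : setInclusionGraph n k l ≃g setInclusionGraph n k l) :
    Set.InjOn (lowerMap f) {s | #s = k} := fun s hs t ht h => by
  rw [lowerMap_of_card_eq f hs, lowerMap_of_card_eq f ht] at h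
  exact congrArg Subtype.val (f.injective (Subtype.ext h))

/-- Two `k`-sets with `#(s ∪ t) = k + 1` have a common `l`-superset, so their images lie on the
same side; the Johnson graph `J(n, k)` is connected. -/
theorem card_lowerMap_eq_or (hkl : k < l) (hsum : n = k + l)
    (f : setInclusionGraph n k l ≃g setInclusionGraph n k l) :
    (∀ s, #s = k → #(lowerMap f s) = k) ∨ (∀ s, #s = k → #(lowerMap f s) = l) := by
  have hconst := eq_of_forall_card_union_eq_succ (j := k) (fun s => #(lowerMap f s))
    fun s t hs ht hst => by
      obtain ⟨S, hstS, hS⟩ :=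
        exists_superset_card_eq (n := l) (s := s ∪ t) (by omega) (by rw [Fintype.card_fin]; omega)
      have hsS := card_ne_of_adj (f.map_adj_iff.2 ((adj_iff_subset hkl (v := ⟨s, .inl hs⟩)
        (w := ⟨S, .inr hS⟩) hs).2 ⟨hS, subset_union_left.trans hstS⟩))
      have htS := card_ne_of_adj (f.map_adj_iff.2 ((adj_iff_subset hkl (v := ⟨t, .inl ht⟩)
        (w := ⟨S, .inr hS⟩) ht).2 ⟨hS, subset_union_right.trans hstS⟩))
      rw [lowerMap_of_card_eq f hs, lowerMap_of_card_eq f ht]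
      rcases (f ⟨s, .inl hs⟩).2 with h₁ | h₁ <;>
        rcases (f ⟨t, .inl ht⟩).2 with h₂ | h₂ <;>
        rcases (f ⟨S, .inr hS⟩).2 with h₃ | h₃ <;> omega
  obtain ⟨s₀, -, hs₀⟩ := exists_superset_card_eq (s := (∅ : Finset (Fin n))) (n := k)
    (card_empty.trans_le (Nat.zero_le k)) (by rw [Fintype.card_fin]; omega)
  rcases (f ⟨s₀, .inl hs₀⟩).2 with h | h
  · exact .inl fun s hs => by rw [hconst s s₀ hs hs₀, lowerMap_of_card_eq f hs₀, h]
  · exact .inr fun s hs => by rw [hconst s s₀ hs hs₀, lowerMap_of_card_eq f hs₀, h]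

/-- `f` preserves the number of common neighbours of two `k`-sets `s, t`; this is the number of
`l`-sets containing `s ∪ t`, largest exactly when `#(s ∪ t) = k + 1`. -/
theorem isJohnsonEmbedding_lowerMap (hk : 1 ≤ k) (hkl : k < l) (hsum : n = k + l)
    {f : setInclusionGraph n k l ≃g setInclusionGraph n k l}
    (hf : ∀ s, #s = k → #(lowerMap f s) = k) : IsJohnsonEmbedding k (lowerMap f) where
  card_map := hf
  injOn := lowerMap_injOn f
  card_union s t hs ht hst := by
    have hcard : ∀ {s}, (hs : #s = k) → #(f ⟨s, .inl hs⟩).1 = k := fun hs =>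
      lowerMap_of_card_eq f hs ▸ hf _ hs
    have hcount : #((univ.powersetCard l).filter (lowerMap f s ∪ lowerMap f t ⊆ ·)) =
        #((univ.powersetCard l).filter (s ∪ t ⊆ ·)) := by
      rw [lowerMap_of_card_eq f hs, lowerMap_of_card_eq f ht,
        ← ncard_commonNeighbors hkl (hcard hs) (hcard ht), f.ncard_commonNeighbors,
        ncard_commonNeighbors hkl hs ht]
    have hne : lowerMap f s ≠ lowerMap f t := fun h => by
      rw [lowerMap_injOn f hs ht h, union_self] at hst
      omega
    have := lt_card_union_of_ne (hf s hs) (hf t ht) hne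
    by_contra hne'
    have := card_filter_powersetCard_subset_lt (m := l) (U := s ∪ t)
      (U' := lowerMap f s ∪ lowerMap f t) (by omega) (by omega) (by rw [Fintype.card_fin]; omega)
    omega

theorem exists_eq_permAut (hk : 1 ≤ k) (hkl : k < l) (hsum : n = k + l)
    {f : setInclusionGraph n k l ≃g setInclusionGraph n k l}
    (hf : ∀ s, #s = k → #(lowerMap f s) = k) : ∃ σ, f = permAut σ := by
  obtain ⟨σ, hσ⟩ :=
    (isJohnsonEmbedding_lowerMap hk hkl hsum hf).exists_perm hk (by rw [Fintype.card_fin]; omega)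
  refine ⟨σ, (inv_mul_eq_one.1 (eq_one_of_forall_card_eq hk hkl fun v hv => ?_)).symm⟩
  have hfv : f v = permAut σ v :=
    Subtype.ext (by rw [permAut_apply_val, ← hσ _ hv, lowerMap_of_card_eq f hv])
  rw [RelIso.mul_apply, hfv, RelIso.inv_apply_self]

theorem autHom_injective (hk : 1 ≤ k) (hkl : k < l) (hsum : n = k + l) :
    Function.Injective (autHom hsum) := by
  rw [injective_iff_map_eq_one]
  rintro ⟨σ, ε⟩ h
  obtain ⟨e, rfl⟩ := Multiplicative.ofAdd.surjective ε
  obtain rfl | rfl : e = 0 ∨ e = 1 := (by decide : ∀ e : ZMod 2, e = 0 ∨ e = 1) e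
  · have hσ : σ = 1 := Equiv.Perm.eq_one_of_forall_map_eq hk (by rw [Fintype.card_fin]; omega)
      fun s hs => by simpa [autHom_apply] using congrArg (fun f => (f ⟨s, .inl hs⟩).1) h
    simp [hσ]
  · obtain ⟨s, -, hs⟩ := exists_superset_card_eq (s := (∅ : Finset (Fin n))) (n := k)
      (card_empty.trans_le (Nat.zero_le k)) (by rw [Fintype.card_fin]; omega)
    have := congrArg (fun f => #(f ⟨s, .inl hs⟩).1) h
    simp only [autHom_apply, toAdd_ofAdd, ZMod.val_one, pow_one, RelIso.coe_mul,
      Function.comp_apply, permAut_apply_val, complAut_apply_val, card_map, card_compl,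
      Fintype.card_fin, RelIso.coe_one, id_eq] at this
    omega

theorem autHom_surjective (hk : 1 ≤ k) (hkl : k < l) (hsum : n = k + l) :
    Function.Surjective (autHom hsum) := by
  intro f
  rcases card_lowerMap_eq_or hkl hsum f with hf | hf
  · obtain ⟨σ, rfl⟩ := exists_eq_permAut hk hkl hsum hf
    exact ⟨(σ, 1), by simp [autHom_apply]⟩
  · obtain ⟨σ, hσ⟩ := exists_eq_permAut hk hkl hsum (f := complAut hsum * f) fun s hs => by
      rw [lowerMap_of_card_eq _ hs, RelIso.mul_apply, complAut_apply_val, card_compl,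
        ← lowerMap_of_card_eq f hs, hf s hs, Fintype.card_fin]
      omega
    refine ⟨(σ, .ofAdd 1), ?_⟩
    rw [autHom_apply, toAdd_ofAdd, ZMod.val_one, pow_one, (commute_permAut_complAut hsum σ).eq,
      ← hσ, ← mul_assoc, complAut_mul_self, one_mul]

end SetInclusionGraph

theorem stmt_8_general (n k l : ℕ) (hk : 1 ≤ k) (hkl : k < l) (hsum : n = k + l) :
    Nonempty ((setInclusionGraph n k l ≃g setInclusionGraph n k l) ≃*
      Equiv.Perm (Fin n) × Multiplicative (ZMod 2)) :=
  ⟨(MulEquiv.ofBijective (SetInclusionGraph.autHom hsum)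
    ⟨SetInclusionGraph.autHom_injective hk hkl hsum,
      SetInclusionGraph.autHom_surjective hk hkl hsum⟩).symm⟩

/-- For `1 ≤ k < l ≤ n−1` with `n = k + l`, the automorphism group of the
set-inclusion graph `G(n,k,l)` is isomorphic to `Sym([n]) × ℤ₂`. -/
theorem stmt_8 (n k l : ℕ) (hk : 1 ≤ k) (hkl : k < l) (hl : l ≤ n - 1)
    (hsum : n = k + l) :
    Nonempty ((setInclusionGraph n k l ≃g setInclusionGraph n k l) ≃*
      Equiv.Perm (Fin n) × Multiplicative (ZMod 2)) :=
  stmt_8_general n k l hk hkl hsum
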